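/- arXiv:1807.06776 — 2 statements merged into one kernel-verified Lean document; each statement's English description precedes it below -/
import Mathlib

section
/- Let Z be standard normal and U ~ χ²_m/m independent of Z, with σ² > 0 fixed. Then for every fixed t ≥ 0, the function a(τ²) := P( (τ² + σ²)Z² / (τ² + σ²U) ≥ t ) is non-increasing in τ² ∈ [0, ∞). -/
/-!
Conditionally on `U = u`, the event is `Z² ≥ t (τ² + σ² u) / (τ² + σ²)`. With `λ = σ² / (τ² + σ²)`
and `G x = P(Z² ≥ x)` this gives `a(τ²) = h(λ) := E G(t (1 - λ + λ U))`, where `U` has the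
`Gamma(m/2, m/2)` density. The derivative of `G` on `(0, ∞)` is minus the `χ²₁` density, which is
decreasing, so `G` is convex there and `h` is convex on `[0, 1]`. Since `E U = 1`, Jensen's
inequality gives `h 0 = G t ≤ h λ`; a convex function that is smallest at the left end point is
nondecreasing. As `λ` decreases in `τ²`, `a` is nonincreasing.
-/

open MeasureTheory

/-- Density of the standard normal distribution. -/
noncomputable def stdNormalPDF (t : ℝ) : ℝ :=
  (Real.sqrt (2 * Real.pi))⁻¹ * Real.exp (-(t ^ 2) / 2)

/-- Density of `U = V/m` where `V ~ χ²_m`. -/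
noncomputable def chi2OverMPDF (m : ℕ) (u : ℝ) : ℝ :=
  if 0 < u then
    (m : ℝ) * (((m : ℝ) * u) ^ ((m : ℝ) / 2 - 1) * Real.exp (-((m : ℝ) * u) / 2)) /
      (2 ^ ((m : ℝ) / 2) * Real.Gamma ((m : ℝ) / 2))
  else 0

/-- `a(τ²) = P((τ² + σ²) Z² / (τ² + σ² U) ≥ t)` for `Z` standard normal and `U ~ χ²_m/m`
independent. -/
noncomputable def aFun (m : ℕ) (σ2 t τ2 : ℝ) : ℝ :=
  ∫ z : ℝ, ∫ u in Set.Ioi (0 : ℝ),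
    Set.indicator {p : ℝ × ℝ | t ≤ (τ2 + σ2) * p.1 ^ 2 / (τ2 + σ2 * p.2)}
      (fun _ => (1 : ℝ)) (z, u) * stdNormalPDF z * chi2OverMPDF m u

open Real Set ProbabilityTheory

lemma stdNormalPDF_eq_gaussianPDFReal : stdNormalPDF = gaussianPDFReal 0 1 := by
  ext z
  simp [stdNormalPDF, gaussianPDFReal]

lemma stdNormalPDF_pos (z : ℝ) : 0 < stdNormalPDF z := by
  rw [stdNormalPDF_eq_gaussianPDFReal]
  exact gaussianPDFReal_pos _ _ _ one_ne_zero

lemma integrable_stdNormalPDF : Integrable stdNormalPDF :=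
  stdNormalPDF_eq_gaussianPDFReal ▸ integrable_gaussianPDFReal 0 1

lemma integral_stdNormalPDF : ∫ z, stdNormalPDF z = 1 := by
  rw [stdNormalPDF_eq_gaussianPDFReal]
  exact integral_gaussianPDFReal_eq_one 0 one_ne_zero

lemma stdNormalPDF_abs (z : ℝ) : stdNormalPDF |z| = stdNormalPDF z := by
  simp [stdNormalPDF]

lemma stdNormalPDF_antitoneOn : AntitoneOn stdNormalPDF (Ici 0) := by
  intro x hx y _ hxy
  unfold stdNormalPDF
  gcongr

noncomputable def sqNormalTail (x : ℝ) : ℝ := ∫ z in {z : ℝ | x ≤ z ^ 2}, stdNormalPDF z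

-- The density of `Z²`, so that `sqNormalTail' = -chiSqOnePDF` on `(0, ∞)`.
noncomputable def chiSqOnePDF (x : ℝ) : ℝ := stdNormalPDF (√x) / √x

lemma sqNormalTail_nonneg (x : ℝ) : 0 ≤ sqNormalTail x :=
  setIntegral_nonneg (measurableSet_le measurable_const (by fun_prop))
    fun z _ => (stdNormalPDF_pos z).le

lemma sqNormalTail_le_one (x : ℝ) : sqNormalTail x ≤ 1 :=
  integral_stdNormalPDF ▸ setIntegral_le_integral integrable_stdNormalPDF
    (ae_of_all _ fun z => (stdNormalPDF_pos z).le)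

lemma sqNormalTail_antitone : Antitone sqNormalTail := fun _ y hxy =>
  setIntegral_mono_set integrable_stdNormalPDF.integrableOn
    (ae_of_all _ fun z => (stdNormalPDF_pos z).le)
    (LE.le.eventuallyLE fun _ (hz : y ≤ _) => hxy.trans hz)

lemma measurable_sqNormalTail : Measurable sqNormalTail := sqNormalTail_antitone.measurable

lemma sqNormalTail_eq_two_mul_integral_Ici {x : ℝ} (hx : 0 < x) :
    sqNormalTail x = 2 * ∫ s in Ici √x, stdNormalPDF s := by
  have hind : ∀ z, {z : ℝ | x ≤ z ^ 2}.indicator stdNormalPDF z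
      = (Ici √x).indicator stdNormalPDF |z| := by
    intro z
    have hmem : x ≤ z ^ 2 ↔ √x ≤ |z| := by rw [sqrt_le_left (abs_nonneg z), sq_abs]
    by_cases h : x ≤ z ^ 2
    · rw [indicator_of_mem (show z ∈ {z : ℝ | x ≤ z ^ 2} from h),
        indicator_of_mem (show |z| ∈ Ici √x from hmem.mp h), stdNormalPDF_abs]
    · rw [indicator_of_notMem (show z ∉ {z : ℝ | x ≤ z ^ 2} from h),
        indicator_of_notMem (show |z| ∉ Ici √x from mt hmem.mpr h)]
  rw [sqNormalTail, ← integral_indicator (measurableSet_le measurable_const (by fun_prop)),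
    funext hind, integral_comp_abs, setIntegral_indicator measurableSet_Ici,
    inter_eq_right.mpr (Ici_subset_Ioi.mpr (sqrt_pos.mpr hx))]

lemma sqNormalTail_sub {a b : ℝ} (ha : 0 < a) (hab : a ≤ b) :
    sqNormalTail a - sqNormalTail b = 2 * ∫ s in √a..√b, stdNormalPDF s := by
  rw [sqNormalTail_eq_two_mul_integral_Ici ha, sqNormalTail_eq_two_mul_integral_Ici
    (ha.trans_le hab), ← mul_sub, intervalIntegral.integral_Ici_sub_Ici'
    integrable_stdNormalPDF.integrableOn integrable_stdNormalPDF.integrableOn]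

lemma sqNormalTail_sub_bounds {a b : ℝ} (ha : 0 < a) (hab : a ≤ b) :
    (b - a) * chiSqOnePDF b ≤ sqNormalTail a - sqNormalTail b ∧
      sqNormalTail a - sqNormalTail b ≤ (b - a) * chiSqOnePDF a := by
  have hsa : 0 < √a := sqrt_pos.mpr ha
  have hsab : √a ≤ √b := sqrt_le_sqrt hab
  have hφ : ∀ s ∈ Icc (√a) (√b), stdNormalPDF (√b) ≤ stdNormalPDF s ∧
      stdNormalPDF s ≤ stdNormalPDF (√a) := fun s hs =>
    ⟨stdNormalPDF_antitoneOn (hsa.le.trans hs.1) (hsa.le.trans hsab) hs.2,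
      stdNormalPDF_antitoneOn hsa.le (hsa.le.trans hs.1) hs.1⟩
  have hint := integrable_stdNormalPDF.intervalIntegrable (a := √a) (b := √b)
  have hlow := intervalIntegral.integral_mono_on hsab intervalIntegrable_const hint
    fun s hs => (hφ s hs).1
  have hhigh := intervalIntegral.integral_mono_on hsab hint intervalIntegrable_const
    fun s hs => (hφ s hs).2
  rw [intervalIntegral.integral_const, smul_eq_mul] at hlow hhigh
  have hba : b - a = (√b - √a) * (√b + √a) := by
    linear_combination (sq_sqrt (ha.le.trans hab)).symm - (sq_sqrt ha.le).symm
  rw [sqNormalTail_sub ha hab, chiSqOnePDF, chiSqOnePDF, hba]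
  have hφa := stdNormalPDF_pos √a
  have hφb := stdNormalPDF_pos √b
  constructor
  · rw [← mul_div_assoc, div_le_iff₀ (hsa.trans_le hsab)]
    nlinarith [mul_nonneg (sub_nonneg.mpr hsab) hφb.le]
  · rw [← mul_div_assoc, le_div_iff₀ hsa]
    nlinarith [mul_nonneg (sub_nonneg.mpr hsab) hφa.le]

lemma convexOn_sqNormalTail : ConvexOn ℝ (Ioi 0) sqNormalTail := by
  refine convexOn_of_slope_mono_adjacent (convex_Ioi 0) fun {x y z} hx _ hxy hyz => ?_
  have hy : 0 < y := (mem_Ioi.mp hx).trans hxy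
  calc (sqNormalTail y - sqNormalTail x) / (y - x) ≤ -chiSqOnePDF y := by
        rw [div_le_iff₀ (sub_pos.mpr hxy)]
        linarith [(sqNormalTail_sub_bounds hx hxy.le).1]
    _ ≤ (sqNormalTail z - sqNormalTail y) / (z - y) := by
        rw [le_div_iff₀ (sub_pos.mpr hyz)]
        linarith [(sqNormalTail_sub_bounds hy hyz.le).2]

lemma sqNormalTail_tangent_le {t w : ℝ} (ht : 0 < t) (hw : 0 < w) :
    sqNormalTail t - chiSqOnePDF t * (w - t) ≤ sqNormalTail w := by
  rcases le_total t w with h | h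
  · linarith [(sqNormalTail_sub_bounds ht h).2]
  · nlinarith [(sqNormalTail_sub_bounds hw h).1]

lemma chi2OverMPDF_eq_gammaPDFReal (m : ℕ) {u : ℝ} (hu : 0 < u) :
    chi2OverMPDF m u = gammaPDFReal (m / 2) (m / 2) u := by
  rcases Nat.eq_zero_or_pos m with rfl | hm
  · simp [chi2OverMPDF, gammaPDFReal]
  have hm0 : (0 : ℝ) < m := Nat.cast_pos.mpr hm
  rw [chi2OverMPDF, gammaPDFReal, if_pos hu, if_pos hu.le, mul_rpow hm0.le hu.le,
    div_rpow hm0.le zero_le_two, rpow_sub hm0, rpow_one]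
  field_simp

lemma setIntegral_gammaPDFReal_Ioi {a r : ℝ} (ha : 0 < a) (hr : 0 < r) :
    ∫ x in Ioi 0, gammaPDFReal a r x = 1 := by
  rw [setIntegral_congr_fun measurableSet_Ioi fun x (hx : 0 < x) => by
      rw [gammaPDFReal, if_pos hx.le, mul_assoc],
    integral_const_mul, integral_rpow_mul_exp_neg_mul_Ioi ha hr, div_rpow zero_le_one hr.le,
    one_rpow]
  field_simp [(Gamma_pos_of_pos ha).ne', (rpow_pos_of_pos hr a).ne']

lemma integrableOn_gammaPDFReal_Ioi {a r : ℝ} (ha : 0 < a) (hr : 0 < r) :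
    IntegrableOn (gammaPDFReal a r) (Ioi 0) :=
  Integrable.of_integral_ne_zero (by rw [setIntegral_gammaPDFReal_Ioi ha hr]; exact one_ne_zero)

lemma mul_gammaPDFReal {a r x : ℝ} (ha : 0 < a) (hr : 0 < r) (hx : 0 < x) :
    x * gammaPDFReal a r x = a / r * gammaPDFReal (a + 1) r x := by
  rw [gammaPDFReal, gammaPDFReal, if_pos hx.le, if_pos hx.le, Gamma_add_one ha.ne',
    add_sub_cancel_right, rpow_add_one hr.ne', rpow_sub_one hx.ne']
  field_simp [(Gamma_pos_of_pos ha).ne']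

lemma setIntegral_mul_gammaPDFReal_Ioi {a r : ℝ} (ha : 0 < a) (hr : 0 < r) :
    ∫ x in Ioi 0, x * gammaPDFReal a r x = a / r := by
  rw [setIntegral_congr_fun measurableSet_Ioi fun x hx => mul_gammaPDFReal ha hr hx,
    integral_const_mul, setIntegral_gammaPDFReal_Ioi (by linarith) hr, mul_one]

lemma integrableOn_mul_gammaPDFReal_Ioi {a r : ℝ} (ha : 0 < a) (hr : 0 < r) :
    IntegrableOn (fun x => x * gammaPDFReal a r x) (Ioi 0) :=
  IntegrableOn.congr_fun ((integrableOn_gammaPDFReal_Ioi (by linarith) hr).const_mul (a / r))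
    (fun x hx => (mul_gammaPDFReal ha hr hx).symm) measurableSet_Ioi

noncomputable def mixedSqNormalTail (ρ : ℝ → ℝ) (t l : ℝ) : ℝ :=
  ∫ u in Ioi 0, sqNormalTail (t * (1 - l + l * u)) * ρ u

section Mixture

variable {ρ : ℝ → ℝ} {t : ℝ}

lemma integrableOn_sqNormalTail_comp_mul (hρ : IntegrableOn ρ (Ioi 0)) {f : ℝ → ℝ}
    (hf : Measurable f) : IntegrableOn (fun u => sqNormalTail (f u) * ρ u) (Ioi 0) :=
  hρ.bdd_mul (c := 1) (measurable_sqNormalTail.comp hf).aestronglyMeasurable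
    (ae_of_all _ fun u => by
      rw [norm_of_nonneg (sqNormalTail_nonneg _)]
      exact sqNormalTail_le_one _)

lemma mul_one_sub_add_mul_pos {l u : ℝ} (ht : 0 < t) (hl : l ∈ Icc (0 : ℝ) 1) (hu : 0 < u) :
    0 < t * (1 - l + l * u) :=
  mul_pos ht <| by
    rcases hl.2.lt_or_eq with hl1 | rfl
    · nlinarith [mul_nonneg hl.1 hu.le]
    · linarith

lemma convexOn_mixedSqNormalTail (hρ0 : ∀ u ∈ Ioi (0 : ℝ), 0 ≤ ρ u)
    (hρ : IntegrableOn ρ (Ioi 0)) (ht : 0 < t) :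
    ConvexOn ℝ (Icc 0 1) (mixedSqNormalTail ρ t) := by
  refine ⟨convex_Icc 0 1, fun l₁ hl₁ l₂ hl₂ a b ha hb hab => ?_⟩
  have hint : ∀ l, IntegrableOn (fun u => sqNormalTail (t * (1 - l + l * u)) * ρ u) (Ioi 0) :=
    fun l => integrableOn_sqNormalTail_comp_mul hρ (by fun_prop)
  simp only [smul_eq_mul, mixedSqNormalTail]
  rw [← integral_const_mul, ← integral_const_mul,
    ← integral_add ((hint l₁).const_mul a) ((hint l₂).const_mul b)]
  refine setIntegral_mono_on (hint _) (((hint l₁).const_mul a).add ((hint l₂).const_mul b))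
    measurableSet_Ioi fun u hu => ?_
  have harg : t * (1 - (a * l₁ + b * l₂) + (a * l₁ + b * l₂) * u) =
      a * (t * (1 - l₁ + l₁ * u)) + b * (t * (1 - l₂ + l₂ * u)) := by
    linear_combination -t * hab
  have hconv := convexOn_sqNormalTail.2 (mul_one_sub_add_mul_pos ht hl₁ hu)
    (mul_one_sub_add_mul_pos ht hl₂ hu) ha hb hab
  simp only [smul_eq_mul] at hconv
  rw [harg]
  linarith [mul_le_mul_of_nonneg_right hconv (hρ0 u hu)]

lemma mixedSqNormalTail_zero (hρ1 : ∫ u in Ioi 0, ρ u = 1) :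
    mixedSqNormalTail ρ t 0 = sqNormalTail t := by
  simp [mixedSqNormalTail, integral_const_mul, hρ1]

-- Jensen's inequality, through the tangent line of `sqNormalTail` at `t`.
lemma sqNormalTail_le_mixedSqNormalTail (hρ0 : ∀ u ∈ Ioi (0 : ℝ), 0 ≤ ρ u)
    (hρ : IntegrableOn ρ (Ioi 0)) (hρ1 : ∫ u in Ioi 0, ρ u = 1)
    (hρu : IntegrableOn (fun u => u * ρ u) (Ioi 0)) (hmean : ∫ u in Ioi 0, u * ρ u = 1)
    (ht : 0 < t) {l : ℝ} (hl : l ∈ Icc (0 : ℝ) 1) :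
    sqNormalTail t ≤ mixedSqNormalTail ρ t l := by
  set c := chiSqOnePDF t * t * l
  have hdiff : IntegrableOn (fun u => u * ρ u - ρ u) (Ioi 0) := hρu.sub hρ
  have htangent :
      ∫ u in Ioi 0, (sqNormalTail t * ρ u - c * (u * ρ u - ρ u)) = sqNormalTail t := by
    rw [integral_sub (hρ.const_mul _) (hdiff.const_mul c), integral_const_mul,
      integral_const_mul, integral_sub hρu hρ, hρ1, hmean]
    ring
  rw [← htangent]
  refine setIntegral_mono_on ((hρ.const_mul _).sub (hdiff.const_mul c))
    (integrableOn_sqNormalTail_comp_mul hρ (by fun_prop)) measurableSet_Ioi fun u hu => ?_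
  calc sqNormalTail t * ρ u - c * (u * ρ u - ρ u)
      = (sqNormalTail t - chiSqOnePDF t * (t * (1 - l + l * u) - t)) * ρ u := by ring
    _ ≤ sqNormalTail (t * (1 - l + l * u)) * ρ u :=
      mul_le_mul_of_nonneg_right
        (sqNormalTail_tangent_le ht (mul_one_sub_add_mul_pos ht hl hu)) (hρ0 u hu)

lemma monotoneOn_mixedSqNormalTail (hρ0 : ∀ u ∈ Ioi (0 : ℝ), 0 ≤ ρ u)
    (hρ : IntegrableOn ρ (Ioi 0)) (hρ1 : ∫ u in Ioi 0, ρ u = 1)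
    (hρu : IntegrableOn (fun u => u * ρ u) (Ioi 0)) (hmean : ∫ u in Ioi 0, u * ρ u = 1)
    (ht : 0 ≤ t) : MonotoneOn (mixedSqNormalTail ρ t) (Icc 0 1) := by
  rcases ht.eq_or_lt with rfl | ht
  · intro l₁ _ l₂ _ _
    simp [mixedSqNormalTail]
  intro l₁ hl₁ l₂ hl₂ hle
  have hjensen := fun {l} (hl : l ∈ Icc (0 : ℝ) 1) => (mixedSqNormalTail_zero hρ1).trans_le
    (sqNormalTail_le_mixedSqNormalTail hρ0 hρ hρ1 hρu hmean ht hl)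
  rcases hl₁.1.eq_or_lt with rfl | hl₁pos
  · exact hjensen hl₂
  · exact (convexOn_mixedSqNormalTail hρ0 hρ ht).le_right_of_left_le''
      (left_mem_Icc.mpr zero_le_one) hl₂ hl₁pos hle (hjensen hl₁)

end Mixture

lemma integral_integral_indicator_mul_mul {α β : Type*} [MeasurableSpace α]
    [MeasurableSpace β] {μ : Measure α} {ν : Measure β} [SFinite μ] [SFinite ν]
    {f : α → ℝ} {g : β → ℝ} (hf : Integrable f μ) (hg : Integrable g ν) {S : Set (α × β)}
    (hS : MeasurableSet S) :
    ∫ x, ∫ y, S.indicator (fun _ => (1 : ℝ)) (x, y) * f x * g y ∂ν ∂μ =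
      ∫ y, (∫ x in {x | (x, y) ∈ S}, f x ∂μ) * g y ∂ν := by
  have hind : ∀ p : α × β, S.indicator (fun _ => (1 : ℝ)) p * f p.1 * g p.2 =
      S.indicator (fun p => f p.1 * g p.2) p := by
    intro p
    by_cases hp : p ∈ S <;> simp [hp]
  have hint : Integrable (Function.uncurry fun x y =>
      S.indicator (fun _ => (1 : ℝ)) (x, y) * f x * g y) (μ.prod ν) :=
    ((hf.mul_prod hg).indicator hS).congr (ae_of_all _ fun p => (hind p).symm)
  rw [integral_integral_swap hint]
  refine integral_congr_ae (ae_of_all _ fun y => ?_)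
  dsimp only
  have hsection : MeasurableSet {x | (x, y) ∈ S} := hS.preimage measurable_prodMk_right
  rw [← integral_mul_const, ← integral_indicator hsection]
  congr 1
  ext x
  by_cases hx : (x, y) ∈ S <;> simp [hx]

lemma aFun_eq_mixedSqNormalTail {m : ℕ} {σ2 t τ2 : ℝ} (hm : 1 ≤ m) (hσ : 0 < σ2)
    (hτ : 0 ≤ τ2) :
    aFun m σ2 t τ2 = mixedSqNormalTail (gammaPDFReal (m / 2) (m / 2)) t (σ2 / (τ2 + σ2)) := by
  have hm2 : (0 : ℝ) < m / 2 := half_pos (Nat.cast_pos.mpr hm)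
  have hN : 0 < τ2 + σ2 := by linarith
  rw [aFun, integral_integral_indicator_mul_mul integrable_stdNormalPDF
    (IntegrableOn.congr_fun (integrableOn_gammaPDFReal_Ioi hm2 hm2)
      (fun u hu => (chi2OverMPDF_eq_gammaPDFReal m hu).symm) measurableSet_Ioi)
    (measurableSet_le measurable_const (by fun_prop)), mixedSqNormalTail]
  refine setIntegral_congr_fun measurableSet_Ioi fun u (hu : 0 < u) => ?_
  have hD : 0 < τ2 + σ2 * u := by positivity
  have harg : t * (1 - σ2 / (τ2 + σ2) + σ2 / (τ2 + σ2) * u) =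
      t * (τ2 + σ2 * u) / (τ2 + σ2) := by
    field_simp
    ring
  have hsection : {z : ℝ | (z, u) ∈ {p : ℝ × ℝ | t ≤ (τ2 + σ2) * p.1 ^ 2 / (τ2 + σ2 * p.2)}} =
      {z : ℝ | t * (τ2 + σ2 * u) / (τ2 + σ2) ≤ z ^ 2} := by
    ext z
    change t ≤ (τ2 + σ2) * z ^ 2 / (τ2 + σ2 * u) ↔ t * (τ2 + σ2 * u) / (τ2 + σ2) ≤ z ^ 2
    rw [le_div_iff₀ hD, div_le_iff₀ hN, mul_comm (z ^ 2)]
  rw [harg, sqNormalTail, hsection, chi2OverMPDF_eq_gammaPDFReal m hu]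

/-- The Welch-type squared statistic tail probability is non-increasing in the inflation
parameter `τ²`. -/
theorem stmt_1 (m : ℕ) (hm : 1 ≤ m) (σ2 : ℝ) (hσ : 0 < σ2) (t : ℝ) (ht : 0 ≤ t) :
    AntitoneOn (aFun m σ2 t) (Set.Ici 0) := by
  have hm2 : (0 : ℝ) < m / 2 := half_pos (Nat.cast_pos.mpr hm)
  have hweight : ∀ τ2 : ℝ, 0 ≤ τ2 → σ2 / (τ2 + σ2) ∈ Icc (0 : ℝ) 1 := fun τ2 hτ =>
    ⟨by positivity, (div_le_one (by linarith)).mpr (by linarith)⟩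
  intro τ2 (hτ : 0 ≤ τ2) τ2' (hτ' : 0 ≤ τ2') hle
  rw [aFun_eq_mixedSqNormalTail hm hσ hτ, aFun_eq_mixedSqNormalTail hm hσ hτ']
  exact monotoneOn_mixedSqNormalTail (fun u _ => gammaPDFReal_nonneg hm2 hm2 u)
    (integrableOn_gammaPDFReal_Ioi hm2 hm2) (setIntegral_gammaPDFReal_Ioi hm2 hm2)
    (integrableOn_mul_gammaPDFReal_Ioi hm2 hm2)
    (by rw [setIntegral_mul_gammaPDFReal_Ioi hm2 hm2, div_self hm2.ne']) ht
    (hweight τ2' hτ') (hweight τ2 hτ) (div_le_div_of_nonneg_left hσ.le (by linarith) (by linarith))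
end

section
/- (Binomial tail bound for BH-type counts) Let Y₁,…,Y_n be independent events with P(Y_i ≤ (k+l)β/N for the i-th p-value) ≤ (1+δ)(k+l)β/N for all k ≥ 1, l ≥ 0, where 2e(1+δ)β < 1. Define A_{k,l} as the event that at least k of the p-values are ≤ (k+l)β/N. Then P(A_{k,l}) ≤ C(n,k)·((k+l)(1+δ)β/N)^k, and the sequence a_{k,l} = C(n,k)((k+l)(1+δ)β/N)^k is non-increasing in k for k ≥ (1−γ)l when n ≤ (1−γ)N, using (1+1/(k+l))^k ≤ e^{k/(k+l)} and sup_{u≥1} restrictions giving ratio bound a_{k+1,l}/a_{k,l} ≤ 2√e(1+δ)β < 1. -/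
/-!
A union bound over the `C(n, k)` sets of `k` indices, together with independence, gives the tail
bound. For the monotonicity, `a_{k+1,l} / a_{k,l}` equals `(n - k) / (k + 1)` times
`(1 + 1/(k+l))^k ≤ exp (k/(k+l)) ≤ e` times `(k+1+l)(1+δ)β/N`; since `n ≤ (1-γ)N` and
`(1-γ)(k+1+l) ≤ 2(k+1)` when `(1-γ)l ≤ k`, the ratio is at most `2e(1+δ)β < 1`.
-/

open MeasureTheory ProbabilityTheory Finset

section TailBound

variable {Ω ι : Type*} [Fintype ι]

theorem setOf_le_card_filter_subset_biUnion (P : ι → Ω → Prop) [∀ i ω, Decidable (P i ω)]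
    (k : ℕ) : {ω | k ≤ #{i | P i ω}} ⊆ ⋃ s ∈ powersetCard k univ, ⋂ i ∈ s, {ω | P i ω} := by
  intro ω hω
  obtain ⟨s, hs, rfl⟩ := exists_subset_card_eq hω
  simp only [Set.mem_iUnion, Set.mem_iInter, mem_powersetCard]
  exact ⟨s, ⟨subset_univ s, rfl⟩, fun i hi => (mem_filter.mp (hs hi)).2⟩

theorem ProbabilityTheory.iIndepFun.measure_le_card_filter_mem_le [MeasurableSpace Ω] {μ : Measure Ω}
    {β : ι → Type*} [∀ i, MeasurableSpace (β i)] {f : ∀ i, Ω → β i} (hf : iIndepFun f μ)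
    {S : ∀ i, Set (β i)} (hS : ∀ i, MeasurableSet (S i)) [∀ i ω, Decidable (f i ω ∈ S i)]
    {c : ENNReal} (hc : ∀ i, μ (f i ⁻¹' S i) ≤ c) (k : ℕ) :
    μ {ω | k ≤ #{i | f i ω ∈ S i}} ≤ (Fintype.card ι).choose k * c ^ k := by
  calc μ {ω | k ≤ #{i | f i ω ∈ S i}}
      ≤ ∑ s ∈ powersetCard k univ, μ (⋂ i ∈ s, f i ⁻¹' S i) :=
        (measure_mono (setOf_le_card_filter_subset_biUnion (fun i ω => f i ω ∈ S i) k)).trans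
          (measure_biUnion_finset_le _ _)
    _ ≤ ∑ _s ∈ powersetCard k (univ : Finset ι), c ^ k := by
        refine sum_le_sum fun s hs => ?_
        rw [hf.measure_inter_preimage_eq_mul s (fun i _ => hS i), ← (mem_powersetCard.mp hs).2]
        exact prod_le_pow_card s _ c fun i _ => hc i
    _ = (Fintype.card ι).choose k * c ^ k := by
        rw [sum_const, card_powersetCard, card_univ, nsmul_eq_mul]

end TailBound

theorem add_one_div_pow_le_exp_one {m : ℝ} (hm : 0 < m) {k : ℕ} (hk : (k : ℝ) ≤ m) :
    ((m + 1) / m) ^ k ≤ Real.exp 1 :=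
  calc ((m + 1) / m) ^ k = (1 / m + 1) ^ k := by rw [add_div, div_self hm.ne', one_div, add_comm]
    _ ≤ Real.exp (1 / m) ^ k := by gcongr; exact Real.add_one_le_exp _
    _ = Real.exp (k / m) := by rw [← Real.exp_nat_mul, mul_one_div]
    _ ≤ Real.exp 1 := Real.exp_le_exp.mpr ((div_le_one hm).mpr hk)

theorem choose_succ_mul_pow_succ_le {n k l : ℕ} (hk : 0 < k) {r : ℝ} (hr : 0 ≤ r)
    (h : ((n - k : ℕ) : ℝ) * (k + 1 + l) * r * Real.exp 1 ≤ k + 1) :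
    (n.choose (k + 1) : ℝ) * ((k + 1 + l) * r) ^ (k + 1) ≤ n.choose k * ((k + l) * r) ^ k := by
  have hm : (0 : ℝ) < k + l := by positivity
  have hpow : ((k + 1 + l) * r) ^ k ≤ Real.exp 1 * ((k + l) * r) ^ k :=
    calc ((k + 1 + l) * r) ^ k = (((k + l : ℝ) + 1) / (k + l)) ^ k * ((k + l) * r) ^ k := by
          rw [← mul_pow]; congr 1; field_simp; ring
      _ ≤ Real.exp 1 * ((k + l) * r) ^ k := by
          gcongr; exact add_one_div_pow_le_exp_one hm (by simp)
  have hchoose : (n.choose (k + 1) : ℝ) * (k + 1) = n.choose k * (n - k : ℕ) := by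
    exact_mod_cast Nat.choose_succ_right_eq n k
  refine le_of_mul_le_mul_right ?_ (by positivity : (0 : ℝ) < k + 1)
  calc (n.choose (k + 1) : ℝ) * ((k + 1 + l) * r) ^ (k + 1) * (k + 1)
      = (n.choose (k + 1) * (k + 1)) * ((k + 1 + l) * r) * ((k + 1 + l) * r) ^ k := by ring
    _ = n.choose k * (n - k : ℕ) * ((k + 1 + l) * r) * ((k + 1 + l) * r) ^ k := by rw [hchoose]
    _ ≤ n.choose k * (n - k : ℕ) * ((k + 1 + l) * r) * (Real.exp 1 * ((k + l) * r) ^ k) := by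
        gcongr
    _ = n.choose k * ((k + l) * r) ^ k * ((n - k : ℕ) * (k + 1 + l) * r * Real.exp 1) := by ring
    _ ≤ n.choose k * ((k + l) * r) ^ k * (k + 1) := by gcongr

open Classical in
theorem stmt_16_general {Ω : Type*} [MeasureSpace Ω]
    (n N : ℕ) (hN : 1 ≤ N) (γ β δ : ℝ) (hγ : 0 < γ)
    (hβ : 0 < β) (hδ : 0 ≤ δ) (hsmall : 2 * Real.exp 1 * (1 + δ) * β < 1)
    (hnN : (n : ℝ) ≤ (1 - γ) * N)
    (p : Fin n → Ω → ℝ)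
    (hindep : iIndepFun p ℙ)
    (hmarg : ∀ i, ∀ k l : ℕ, 1 ≤ k →
      ℙ {ω | p i ω ≤ ((k : ℝ) + l) * β / N} ≤
        ENNReal.ofReal ((1 + δ) * ((k : ℝ) + l) * β / N)) :
    (∀ k l : ℕ, 1 ≤ k →
      ℙ {ω | k ≤ (Finset.univ.filter fun i => p i ω ≤ ((k : ℝ) + l) * β / N).card} ≤
        ENNReal.ofReal ((n.choose k) * (((k : ℝ) + l) * (1 + δ) * β / N) ^ k)) ∧
    (∀ k l : ℕ, 1 ≤ k → (1 - γ) * l ≤ k →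
      ((n.choose (k + 1)) : ℝ) * (((k : ℝ) + 1 + l) * (1 + δ) * β / N) ^ (k + 1) ≤
        (n.choose k) * (((k : ℝ) + l) * (1 + δ) * β / N) ^ k) := by
  have hN0 : (0 : ℝ) < N := by exact_mod_cast hN
  refine ⟨fun k l hk => ?_, fun k l hk hkl => ?_⟩
  · have h := hindep.measure_le_card_filter_mem_le (fun _ => measurableSet_Iic)
      (fun i => (hmarg i k l hk).trans_eq (by rw [mul_comm (1 + δ)])) k
    rw [ENNReal.ofReal_mul (by positivity), ENNReal.ofReal_pow (by positivity),
      ENNReal.ofReal_natCast]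
    simpa using h
  · have hfactor : ∀ m : ℝ, m * (1 + δ) * β / N = m * ((1 + δ) * β / N) := fun m => by ring
    rw [hfactor, hfactor]
    refine choose_succ_mul_pow_succ_le hk (by positivity) ?_
    have hgrowth : (1 - γ) * (k + 1 + l) ≤ 2 * (k + 1) := by
      nlinarith [mul_nonneg hγ.le (by positivity : (0 : ℝ) ≤ k + 1)]
    calc ((n - k : ℕ) : ℝ) * (k + 1 + l) * ((1 + δ) * β / N) * Real.exp 1
        ≤ (1 - γ) * N * (k + 1 + l) * ((1 + δ) * β / N) * Real.exp 1 := by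
          gcongr; exact (Nat.cast_le.mpr (Nat.sub_le n k)).trans hnN
      _ = (1 - γ) * (k + 1 + l) * (2 * Real.exp 1 * (1 + δ) * β) / 2 := by field_simp
      _ ≤ 2 * (k + 1) * 1 / 2 := by gcongr
      _ = k + 1 := by ring

open Classical in
/-- Binomial tail bound for BH-type counts: with `n ≤ (1-γ)N` independent p-values each
satisfying `P(pᵢ ≤ (k+l)β/N) ≤ (1+δ)(k+l)β/N`, the probability that at least `k` of them are
`≤ (k+l)β/N` is at most `C(n,k)((k+l)(1+δ)β/N)^k`, and this bound `a_{k,l}` is non-increasing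
in `k` for `k ≥ (1-γ)l`. -/
theorem stmt_16 {Ω : Type*} [MeasureSpace Ω] [IsProbabilityMeasure (ℙ : Measure Ω)]
    (n N : ℕ) (hn : 1 ≤ n) (hN : 1 ≤ N) (γ β δ : ℝ) (hγ : 0 < γ) (hγ1 : γ < 1)
    (hβ : 0 < β) (hδ : 0 ≤ δ) (hsmall : 2 * Real.exp 1 * (1 + δ) * β < 1)
    (hnN : (n : ℝ) ≤ (1 - γ) * N)
    (p : Fin n → Ω → ℝ) (hmeas : ∀ i, Measurable (p i))
    (hindep : iIndepFun p ℙ)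
    (hmarg : ∀ i, ∀ k l : ℕ, 1 ≤ k →
      ℙ {ω | p i ω ≤ ((k : ℝ) + l) * β / N} ≤
        ENNReal.ofReal ((1 + δ) * ((k : ℝ) + l) * β / N)) :
    (∀ k l : ℕ, 1 ≤ k →
      ℙ {ω | k ≤ (Finset.univ.filter fun i => p i ω ≤ ((k : ℝ) + l) * β / N).card} ≤
        ENNReal.ofReal ((n.choose k) * (((k : ℝ) + l) * (1 + δ) * β / N) ^ k)) ∧
    (∀ k l : ℕ, 1 ≤ k → (1 - γ) * l ≤ k →
      ((n.choose (k + 1)) : ℝ) * (((k : ℝ) + 1 + l) * (1 + δ) * β / N) ^ (k + 1) ≤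
        (n.choose k) * (((k : ℝ) + l) * (1 + δ) * β / N) ^ k) :=
  stmt_16_general n N hN γ β δ hγ hβ hδ hsmall hnN p hindep hmarg
end
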